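/- arXiv:2309.00508 — 6 statements merged into one kernel-verified Lean document; each statement's English description precedes it below -/
import Mathlib

section
/- Let (c_j)_{j≥0} be a real sequence such that for every N there exist an odd j_odd > N and an even j_even > N with c_{j_odd} ≠ 0 and c_{j_even} ≠ 0. Let p_1, …, p_r be distinct nonzero reals and α_1, …, α_r reals. If the power series ∑_{j≥0} c_j (∑_{k=1}^r α_k p_k^j) ε^j has only finitely many nonzero coefficients (i.e., is a polynomial in ε), then α_k = 0 for all k. -/
/-!
Let `M = p k₀ ^ 2` be the largest `p k ^ 2` with `α k ≠ 0`. Dividing the power sums by `M ^ i`, the even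
ones `∑ α k * p k ^ (2 i)` tend to `α k₀ + α k₁` and the odd ones (up to the factor `p k₀`) to `α k₀ - α k₁`,
where `k₁` is the index with `p k₁ = -p k₀`, if any. Both limits vanish since the sums vanish infinitely
often, so `α k₀ = 0`, a contradiction. The growth condition on `c` together with the finiteness of the
series gives infinitely many even and infinitely many odd vanishing power sums.
-/

open Filter Finset Topology

lemma Filter.frequently_two_mul_of_frequently_even {P : ℕ → Prop}
    (h : ∃ᶠ j in atTop, Even j ∧ P j) : ∃ᶠ i in atTop, P (2 * i) := by
  rw [frequently_atTop] at h ⊢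
  intro a
  obtain ⟨j, hj, ⟨i, rfl⟩, hP⟩ := h (2 * a)
  exact ⟨i, by omega, by rwa [two_mul]⟩

lemma Filter.frequently_two_mul_add_one_of_frequently_odd {P : ℕ → Prop}
    (h : ∃ᶠ j in atTop, Odd j ∧ P j) : ∃ᶠ i in atTop, P (2 * i + 1) := by
  rw [frequently_atTop] at h ⊢
  intro a
  obtain ⟨j, hj, ⟨i, rfl⟩, hP⟩ := h (2 * a)
  exact ⟨i, by omega, hP⟩

lemma sum_filter_eq_zero_of_frequently_sum_pow_eq_zero {ι : Type*} (s : Finset ι) (β x : ι → ℝ)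
    {M : ℝ} (hM : 0 < M) (hx : ∀ k ∈ s, 0 ≤ x k ∧ x k ≤ M)
    (h : ∃ᶠ i in atTop, ∑ k ∈ s, β k * x k ^ i = 0) :
    ∑ k ∈ s with x k = M, β k = 0 := by
  have hlim : Tendsto (fun i : ℕ => ∑ k ∈ s, β k * (x k / M) ^ i) atTop
      (𝓝 (∑ k ∈ s with x k = M, β k)) := by
    rw [Finset.sum_filter]
    refine tendsto_finsetSum _ fun k hk => ?_
    split_ifs with hkM
    · simp [hkM, hM.ne']
    · have hlt : x k / M < 1 := (div_lt_one hM).2 (lt_of_le_of_ne (hx k hk).2 hkM)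
      simpa using ((tendsto_pow_atTop_nhds_zero_of_lt_one
        (div_nonneg (hx k hk).1 hM.le) hlt).const_mul (β k))
  refine tendsto_nhds_unique_of_frequently_eq hlim tendsto_const_nhds (h.mono fun i hi => ?_)
  simp only [div_pow, ← mul_div_assoc, ← Finset.sum_div, hi, zero_div]

theorem eq_zero_of_frequently_even_odd_sum_pow_eq_zero {ι : Type*} [Fintype ι] {p : ι → ℝ}
    (hp0 : ∀ k, p k ≠ 0) (hp : Function.Injective p) {α : ι → ℝ}
    (heven : ∃ᶠ i in atTop, ∑ k, α k * p k ^ (2 * i) = 0)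
    (hodd : ∃ᶠ i in atTop, ∑ k, α k * p k ^ (2 * i + 1) = 0) :
    ∀ k, α k = 0 := by
  classical
  by_contra! ⟨k', hk'⟩
  set s := univ.filter (α · ≠ 0)
  obtain ⟨k₀, hk₀s, hk₀max⟩ := s.exists_max_image (fun k => p k ^ 2) ⟨k', by simpa [s]⟩
  have hsupp : ∀ β : ι → ℝ, ∑ k, α k * β k = ∑ k ∈ s, α k * β k := fun β =>
    (sum_filter_of_ne fun _ _ h => left_ne_zero_of_mul h).symm
  have hM : 0 < p k₀ ^ 2 := by positivity [hp0 k₀]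
  have hx : ∀ k ∈ s, 0 ≤ p k ^ 2 ∧ p k ^ 2 ≤ p k₀ ^ 2 := fun k hk => ⟨sq_nonneg _, hk₀max k hk⟩
  have hA := sum_filter_eq_zero_of_frequently_sum_pow_eq_zero s α _ hM hx <| heven.mono fun i hi => by
    simpa only [hsupp, pow_mul] using hi
  have hB := sum_filter_eq_zero_of_frequently_sum_pow_eq_zero s (fun k => α k * p k) _ hM hx <|
    hodd.mono fun i hi => by
      rw [hsupp] at hi
      simpa only [pow_succ, pow_mul, mul_assoc, mul_comm (p _)] using hi
  have hcomb : p k₀ * ∑ k ∈ s with p k ^ 2 = p k₀ ^ 2, α k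
      + ∑ k ∈ s with p k ^ 2 = p k₀ ^ 2, α k * p k = 2 * p k₀ * α k₀ := by
    rw [mul_sum, ← sum_add_distrib, sum_eq_single_of_mem k₀ (by simp [hk₀s])]
    · ring
    · intro k hk hne
      rcases sq_eq_sq_iff_eq_or_eq_neg.1 (mem_filter.1 hk).2 with h | h
      · exact absurd (hp h) hne
      · rw [h]; ring
  rw [hA, hB] at hcomb
  exact (mem_filter.1 hk₀s).2 (by simpa [hp0 k₀] using hcomb.symm)

theorem stmt0 (c : ℕ → ℝ)
    (hc : ∀ N : ℕ, (∃ j, Odd j ∧ N < j ∧ c j ≠ 0) ∧ (∃ j, Even j ∧ N < j ∧ c j ≠ 0))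
    (r : ℕ) (p : Fin r → ℝ) (hp0 : ∀ k, p k ≠ 0) (hpinj : Function.Injective p)
    (α : Fin r → ℝ)
    (hfin : {j : ℕ | c j * (∑ k, α k * p k ^ j) ≠ 0}.Finite) :
    ∀ k, α k = 0 := by
  have hvanish : ∀ᶠ j in atTop, c j ≠ 0 → ∑ k, α k * p k ^ j = 0 := by
    rw [← Nat.cofinite_eq_atTop]
    filter_upwards [hfin.eventually_cofinite_notMem] with j hj
    simpa using hj
  have hfreq (P : ℕ → Prop) (hP : ∀ N, ∃ j, P j ∧ N < j ∧ c j ≠ 0) :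
      ∃ᶠ j in atTop, P j ∧ ∑ k, α k * p k ^ j = 0 := by
    have hPc : ∃ᶠ j in atTop, P j ∧ c j ≠ 0 := frequently_atTop'.2 fun N => by
      obtain ⟨j, hPj, hNj, hcj⟩ := hP N
      exact ⟨j, hNj, hPj, hcj⟩
    exact (hPc.and_eventually hvanish).mono fun _ h => ⟨h.1.1, h.2 h.1.2⟩
  exact eq_zero_of_frequently_even_odd_sum_pow_eq_zero hp0 hpinj
    (frequently_two_mul_of_frequently_even (hfreq Even fun N => (hc N).2))
    (frequently_two_mul_add_one_of_frequently_odd (hfreq Odd fun N => (hc N).1))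
end

section
/- Let σ : ℝ → ℝ be given on (−R, R) by a power series σ(x) = ∑_{j≥0} c_j x^j with c_0 ≠ 0 such that for every N there exist odd j_odd > N and even j_even > N with c_{j_odd} ≠ 0 and c_{j_even} ≠ 0 (a 'good activation'). Then for any r and any pairwise distinct w_1, …, w_r ∈ ℝ^d, the functions x ↦ σ(w_1·x), …, x ↦ σ(w_r·x) are linearly independent in the space of real functions on ℝ^d. -/
/-!
Restricting the linear relation `∑ₖ gₖ σ(⟪wₖ, x⟫) = 0` to a line `x = t v` on which the
numbers `xₖ = ⟪wₖ, v⟫` are pairwise distinct, and expanding `σ` near `0`, gives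
`cⱼ ∑ₖ gₖ xₖʲ = 0` for every `j`. Hence `∑ₖ gₖ = 0`, and the power sums `∑ₖ gₖ xₖʲ` vanish
for infinitely many even and infinitely many odd `j`. Dividing by the `j`-th power of the
largest `|xₖ|` with `gₖ ≠ 0` and letting `j → ∞` along the even and along the odd exponents
isolates the coefficients of the nodes `±max |xₖ|`, which therefore vanish.
-/

open Filter Topology

theorem exists_injective_inner {E ι : Type*} [NormedAddCommGroup E] [InnerProductSpace ℝ E]
    [Finite ι] {w : ι → E} (hw : Function.Injective w) :
    ∃ v : E, Function.Injective fun k => inner ℝ (w k) v := by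
  obtain ⟨v, hv⟩ := Module.Dual.exists_forall_ne_zero_of_forall_exists
    (ι := {p : ι × ι // p.1 ≠ p.2}) (fun p => innerₛₗ ℝ (w p.1.1 - w p.1.2))
    fun p => ⟨w p.1.1 - w p.1.2, by
      rw [innerₛₗ_apply_apply]; exact inner_self_ne_zero.mpr (sub_ne_zero.mpr (hw.ne p.2))⟩
  refine ⟨v, fun i j hij => by_contra fun hne => hv ⟨(i, j), hne⟩ ?_⟩
  simp [hij]

theorem eq_zero_of_eventually_hasSum_mul_pow_eq_zero {𝕜 : Type*} [NontriviallyNormedField 𝕜]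
    {b : ℕ → 𝕜} (h : ∀ᶠ t in 𝓝 (0 : 𝕜), HasSum (fun j => b j * t ^ j) 0) : b = 0 := by
  obtain ⟨ε, hε, hball⟩ := Metric.eventually_nhds_iff.mp h
  obtain ⟨t₀, ht₀, ht₀ε⟩ := NormedField.exists_norm_lt 𝕜 hε
  set p := FormalMultilinearSeries.ofScalars 𝕜 b
  have hradius : (‖t₀‖₊ : ENNReal) ≤ p.radius := by
    refine p.le_radius_of_tendsto (l := 0) ?_
    have := (hball (by simpa using ht₀ε)).summable.tendsto_atTop_zero.norm
    simpa [p, FormalMultilinearSeries.ofScalars_norm, norm_mul, norm_pow] using this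
  have hp : HasFPowerSeriesAt (0 : 𝕜 → 𝕜) p 0 := by
    refine ⟨‖t₀‖₊, ⟨hradius, by simpa using ht₀, fun {y} hy => ?_⟩⟩
    have hy : ‖y‖ < ‖t₀‖ := by simpa [enorm_eq_nnnorm, ← NNReal.coe_lt_coe] using hy
    simpa only [p, FormalMultilinearSeries.ofScalars_apply_eq, smul_eq_mul, Pi.zero_apply]
      using hball (by simpa using hy.trans ht₀ε)
  exact (FormalMultilinearSeries.ofScalars_series_eq_zero 𝕜).mp hp.eq_zero

theorem hasSum_sum_mul_comp_mul {ι : Type*} [Fintype ι] {σ : ℝ → ℝ} {c : ℕ → ℝ} {s : Set ℝ}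
    (hσ : ∀ y ∈ s, HasSum (fun j => c j * y ^ j) (σ y)) (g x : ι → ℝ) {t : ℝ}
    (ht : ∀ k, t * x k ∈ s) :
    HasSum (fun j => c j * (∑ k, g k * x k ^ j) * t ^ j) (∑ k, g k * σ (t * x k)) := by
  have hsum := hasSum_sum (s := Finset.univ) fun k _ => (hσ _ (ht k)).mul_left (g k)
  refine hsum.congr_fun fun j => ?_
  rw [Finset.mul_sum, Finset.sum_mul]
  exact Finset.sum_congr rfl fun k _ => by ring

theorem frequently_atTop_two_mul_of_forall_exists_even {P : ℕ → Prop}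
    (h : ∀ N, ∃ j, Even j ∧ N < j ∧ P j) : ∃ᶠ n in atTop, P (2 * n) := by
  refine frequently_atTop.mpr fun N => ?_
  obtain ⟨j, ⟨n, rfl⟩, hj, hP⟩ := h (2 * N)
  exact ⟨n, by omega, by rwa [two_mul]⟩

theorem frequently_atTop_two_mul_add_one_of_forall_exists_odd {P : ℕ → Prop}
    (h : ∀ N, ∃ j, Odd j ∧ N < j ∧ P j) : ∃ᶠ n in atTop, P (2 * n + 1) := by
  refine frequently_atTop.mpr fun N => ?_
  obtain ⟨j, ⟨n, rfl⟩, hj, hP⟩ := h (2 * N)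
  exact ⟨n, by omega, hP⟩

theorem tendsto_mul_div_pow_atTop {b μ m : ℝ} (hm : 0 < m) (hμ : b ≠ 0 → 0 ≤ μ ∧ μ ≤ m) :
    Tendsto (fun n : ℕ => b * (μ / m) ^ n) atTop (𝓝 (if μ = m then b else 0)) := by
  by_cases hμm : μ = m
  · simp [hμm, hm.ne']
  by_cases hb : b = 0
  · simp [hb]
  obtain ⟨hμ₀, hμ₁⟩ := hμ hb
  have hlt : |μ / m| < 1 := by
    rw [abs_of_nonneg (div_nonneg hμ₀ hm.le), div_lt_one hm]
    exact lt_of_le_of_ne hμ₁ hμm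
  simpa [hμm] using (tendsto_pow_atTop_nhds_zero_of_abs_lt_one hlt).const_mul b

theorem sum_ite_eq_zero_of_frequently_sum_mul_pow_eq_zero {ι : Type*} [Fintype ι]
    {b μ : ι → ℝ} {m : ℝ} (hm : 0 < m) (hμ : ∀ k, b k ≠ 0 → 0 ≤ μ k ∧ μ k ≤ m)
    (h : ∃ᶠ n in atTop, ∑ k, b k * μ k ^ n = 0) :
    ∑ k, (if μ k = m then b k else 0) = 0 := by
  have hlim := tendsto_finsetSum Finset.univ fun k _ => tendsto_mul_div_pow_atTop hm (hμ k)
  refine tendsto_nhds_unique_of_frequently_eq hlim tendsto_const_nhds (h.mono fun n hn => ?_)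
  simp_rw [div_pow, ← mul_div_assoc, ← Finset.sum_div, hn, zero_div]

theorem eq_zero_of_frequently_sum_mul_pow_eq_zero {ι : Type*} [Fintype ι] {a x : ι → ℝ}
    (hx : Function.Injective x) (h₀ : ∑ k, a k = 0)
    (heven : ∃ᶠ n in atTop, ∑ k, a k * x k ^ (2 * n) = 0)
    (hodd : ∃ᶠ n in atTop, ∑ k, a k * x k ^ (2 * n + 1) = 0) : a = 0 := by
  by_contra ha
  obtain ⟨k₀, hk₀, hmax⟩ := Finset.exists_max_image (Finset.univ.filter (a · ≠ 0))
    (fun k => x k ^ 2) (by simpa [Finset.Nonempty, funext_iff] using ha)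
  replace hk₀ : a k₀ ≠ 0 := (Finset.mem_filter.mp hk₀).2
  replace hmax : ∀ k, a k ≠ 0 → x k ^ 2 ≤ x k₀ ^ 2 := fun k hk => hmax k (by simpa using hk)
  rcases eq_or_ne (x k₀) 0 with hzero | hne
  · refine hk₀ ((Finset.sum_eq_single k₀ (fun k _ hk => ?_) (by simp)).symm.trans h₀)
    by_contra hak
    have hsq : x k ^ 2 = 0 := le_antisymm (by simpa [hzero] using hmax k hak) (sq_nonneg _)
    exact hk (hx ((pow_eq_zero_iff two_ne_zero).mp hsq |>.trans hzero.symm))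
  have hm : 0 < x k₀ ^ 2 := by positivity
  have hE := sum_ite_eq_zero_of_frequently_sum_mul_pow_eq_zero (b := a) hm
    (fun k hk => ⟨sq_nonneg _, hmax k hk⟩) (by simpa only [pow_mul] using heven)
  have hO := sum_ite_eq_zero_of_frequently_sum_mul_pow_eq_zero (b := fun k => a k * x k) hm
    (fun k hk => ⟨sq_nonneg _, hmax k (left_ne_zero_of_mul hk)⟩)
    (hodd.mono fun n hn => by rw [← hn]; exact Finset.sum_congr rfl fun k _ => by ring)
  -- the dominant nodes are `±x k₀`, and the weight `x k₀ + x k` kills `-x k₀`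
  have hcomb : ∑ k, (if x k ^ 2 = x k₀ ^ 2 then a k * (x k₀ + x k) else 0)
      = 2 * x k₀ * a k₀ := by
    rw [Finset.sum_eq_single k₀ (fun k _ hk => ?_) (by simp)]
    · simp only [if_true]; ring
    split_ifs with hsq
    · rcases sq_eq_sq_iff_eq_or_eq_neg.mp hsq with h | h
      · exact absurd (hx h) hk
      · simp [h]
    · rfl
  have : ∑ k, (if x k ^ 2 = x k₀ ^ 2 then a k * (x k₀ + x k) else 0)
      = x k₀ * ∑ k, (if x k ^ 2 = x k₀ ^ 2 then a k else 0)
        + ∑ k, (if x k ^ 2 = x k₀ ^ 2 then a k * x k else 0) := by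
    rw [Finset.mul_sum, ← Finset.sum_add_distrib]
    exact Finset.sum_congr rfl fun k _ => by split_ifs <;> ring
  rw [hcomb, hE, hO] at this
  exact hk₀ (by simpa [hne] using this)

theorem stmt3 (σ : ℝ → ℝ) (R : ℝ) (hR : 0 < R) (c : ℕ → ℝ)
    (hσ : ∀ x ∈ Set.Ioo (-R) R, HasSum (fun j => c j * x ^ j) (σ x))
    (hc0 : c 0 ≠ 0)
    (hodd : ∀ N : ℕ, ∃ j, Odd j ∧ N < j ∧ c j ≠ 0)
    (heven : ∀ N : ℕ, ∃ j, Even j ∧ N < j ∧ c j ≠ 0)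
    (d r : ℕ) (w : Fin r → EuclideanSpace ℝ (Fin d)) (hw : Function.Injective w) :
    LinearIndependent ℝ
      (fun k => fun x : EuclideanSpace ℝ (Fin d) => σ (inner ℝ (w k) x : ℝ)) := by
  rw [Fintype.linearIndependent_iff]
  intro g hg
  obtain ⟨v, hv⟩ := exists_injective_inner hw
  set x := fun k => inner ℝ (w k) v
  have hline : ∀ t : ℝ, ∑ k, g k * σ (t * x k) = 0 := fun t => by
    simpa [x, real_inner_smul_right] using congrFun hg (t • v)
  have hnear : ∀ᶠ t in 𝓝 (0 : ℝ), ∀ k, t * x k ∈ Set.Ioo (-R) R :=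
    eventually_all.mpr fun k => (continuous_id.mul continuous_const).continuousAt.eventually_mem
      (by simpa using Ioo_mem_nhds (neg_neg_iff_pos.mpr hR) hR)
  have hcoeff : ∀ j, c j * ∑ k, g k * x k ^ j = 0 := congrFun <|
    eq_zero_of_eventually_hasSum_mul_pow_eq_zero <| hnear.mono fun t ht => by
      simpa only [hline] using hasSum_sum_mul_comp_mul hσ g x ht
  have hpow : ∀ j, c j ≠ 0 → ∑ k, g k * x k ^ j = 0 :=
    fun j hj => (mul_eq_zero.mp (hcoeff j)).resolve_left hj
  exact congrFun <| eq_zero_of_frequently_sum_mul_pow_eq_zero hv (by simpa using hpow 0 hc0)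
    ((frequently_atTop_two_mul_of_forall_exists_even heven).mono fun n => hpow _)
    ((frequently_atTop_two_mul_add_one_of_forall_exists_odd hodd).mono fun n => hpow _)
end

section
/- Let σ : ℝ → ℝ be real analytic such that there exists N with c_j = 0 for all odd j > N (i.e., σ is a polynomial plus an even function). Then for r > 2(N+1)^d there exist pairwise distinct w_1, …, w_{2r} ∈ ℝ^d such that σ(w_1·x), …, σ(w_{2r}·x) are linearly dependent. -/
/-!
On `(-R, R)` the power series of `σ t - σ (-t)` has only odd coefficients, and those vanish beyond
`N`; by the identity theorem `σ t - σ (-t)` is therefore a polynomial of degree at most `N` on all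
of `ℝ`. Taking `w = ±(k + 1) e₀` for `k < r`, the odd parts `x ↦ σ (w·x) - σ (-w·x)` are `r`
functions in the `(N + 1)`-dimensional span of `x ↦ x₀ ^ j`, `j ≤ N`, hence linearly dependent,
and any such dependence is one among the `2r` functions `x ↦ σ (w·x)`.
-/

open Set Finset Function Submodule

theorem sub_comp_neg_eq_sum_of_hasSum {σ : ℝ → ℝ} (hσa : AnalyticOnNhd ℝ σ Set.univ) {R : ℝ}
    (hR : 0 < R) {c : ℕ → ℝ} (hσ : ∀ x ∈ Ioo (-R) R, HasSum (fun j => c j * x ^ j) (σ x))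
    {N : ℕ} (hodd : ∀ j, Odd j → N < j → c j = 0) :
    (fun t => σ t - σ (-t)) = fun t => ∑ j ∈ range (N + 1), c j * (1 - (-1) ^ j) * t ^ j := by
  refine AnalyticOnNhd.eq_of_eventuallyEq (𝕜 := ℝ) (z₀ := 0) (fun t _ => ?_)
    (fun t _ => by fun_prop) ?_
  · have := hσa t trivial
    have := hσa (-t) trivial
    fun_prop
  filter_upwards [Ioo_mem_nhds (neg_neg_of_pos hR) hR] with t ht
  have ht' : -t ∈ Ioo (-R) R := ⟨by linarith [ht.2], by linarith [ht.1]⟩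
  have hcoeff_zero : ∀ j ∉ range (N + 1), c j * (1 - (-1) ^ j) * t ^ j = 0 := by
    intro j hj
    rcases Nat.even_or_odd j with he | ho
    · simp [he.neg_one_pow]
    · simp [hodd j ho (by simpa using hj)]
  have hterm : ∀ j, c j * t ^ j - c j * (-t) ^ j = c j * (1 - (-1) ^ j) * t ^ j := fun j => by
    rw [neg_pow]
    ring
  have hsum := (hσ t ht).sub (hσ (-t) ht')
  simp only [hterm] at hsum
  exact hsum.unique (hasSum_sum_of_ne_finset_zero hcoeff_zero)

theorem not_linearIndependent_of_forall_mem_span {R M ι κ : Type*} [Ring R]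
    [StrongRankCondition R] [AddCommGroup M] [Module R M] [Fintype ι] [Fintype κ] {v : ι → M}
    {b : κ → M} (hv : ∀ i, v i ∈ span R (range b)) (hcard : Fintype.card κ < Fintype.card ι) :
    ¬ LinearIndependent R v := by
  classical
  intro hli
  have hle := linearIndependent_le_span' v hli (range b) (by rintro _ ⟨i, rfl⟩; exact hv i)
  rw [Cardinal.mk_fintype, Nat.cast_le] at hle
  exact (hle.trans (Fintype.card_range_le b)).not_gt hcard

theorem not_linearIndependent_comp_mul_of_eq_sum_pow {𝕜 X ι : Type*} [Field 𝕜] [Fintype ι]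
    {P : 𝕜 → 𝕜} {n : ℕ} {a : ℕ → 𝕜} (hP : ∀ t, P t = ∑ j ∈ range n, a j * t ^ j) (s : ι → 𝕜)
    (φ : X → 𝕜) (hn : n < Fintype.card ι) :
    ¬ LinearIndependent 𝕜 (fun k x => P (s k * φ x)) := by
  refine not_linearIndependent_of_forall_mem_span (b := fun (j : Fin n) x => φ x ^ (j : ℕ))
    (fun k => ?_) (by simpa using hn)
  have hexpand : (fun x => P (s k * φ x)) =
      ∑ j : Fin n, (a j * s k ^ (j : ℕ)) • fun x => φ x ^ (j : ℕ) := by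
    funext x
    simp only [hP, Finset.sum_apply, Pi.smul_apply, smul_eq_mul, mul_pow, mul_assoc]
    exact (Fin.sum_univ_eq_sum_range (fun j => a j * (s k ^ j * φ x ^ j)) n).symm
  rw [hexpand]
  exact sum_mem fun j _ => smul_mem _ _ (subset_span (mem_range_self j))

theorem LinearIndependent.sub_of_sumElim {R M ι : Type*} [Ring R] [AddCommGroup M] [Module R M]
    [Fintype ι] {v v' : ι → M} (h : LinearIndependent R (Sum.elim v v')) :
    LinearIndependent R (v - v') := by
  rw [Fintype.linearIndependent_iff] at h ⊢
  intro g hg i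
  refine h (Sum.elim g (-g)) ?_ (Sum.inl i)
  simpa [Fintype.sum_sum_type, smul_sub, Finset.sum_sub_distrib, ← sub_eq_add_neg] using hg

theorem stmt4 (σ : ℝ → ℝ) (hσa : AnalyticOnNhd ℝ σ Set.univ)
    (R : ℝ) (hR : 0 < R) (c : ℕ → ℝ)
    (hσ : ∀ x ∈ Set.Ioo (-R) R, HasSum (fun j => c j * x ^ j) (σ x))
    (N : ℕ) (hodd : ∀ j, Odd j → N < j → c j = 0)
    (d : ℕ) (hd : 0 < d) (r : ℕ) (hr : 2 * (N + 1) ^ d < r) :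
    ∃ w : Fin (2 * r) → EuclideanSpace ℝ (Fin d), Function.Injective w ∧
      ¬ LinearIndependent ℝ
          (fun k => fun x : EuclideanSpace ℝ (Fin d) => σ (inner ℝ (w k) x : ℝ)) := by
  let i₀ : Fin d := ⟨0, hd⟩
  let u : Fin r → EuclideanSpace ℝ (Fin d) := fun k => EuclideanSpace.single i₀ ((k : ℝ) + 1)
  let F : EuclideanSpace ℝ (Fin d) → EuclideanSpace ℝ (Fin d) → ℝ := fun w x => σ (inner ℝ w x)
  have hu : Injective u := fun k l h => by
    simpa [u, Fin.ext_iff] using congrFun (congrArg (⇑) h) i₀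
  have hu_neg : ∀ k l, u k ≠ -u l := fun k l h => by
    have := congrFun (congrArg (⇑) h) i₀
    simp only [PiLp.single_eq_same, PiLp.neg_apply, neg_add_rev, u] at this
    linarith
  let e : Fin (2 * r) ≃ Fin r ⊕ Fin r := (finCongr (two_mul r)).trans finSumFinEquiv.symm
  refine ⟨Sum.elim u (-u) ∘ e, (hu.sumElim (neg_injective.comp hu) hu_neg).comp e.injective,
    fun hli => ?_⟩
  have hli_elim := (linearIndependent_equiv e (f := F ∘ Sum.elim u (-u))).mp hli
  rw [Sum.comp_elim] at hli_elim
  refine not_linearIndependent_comp_mul_of_eq_sum_pow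
    (congrFun (sub_comp_neg_eq_sum_of_hasSum hσa hR hσ hodd)) (fun k : Fin r => (k : ℝ) + 1)
    (fun x : EuclideanSpace ℝ (Fin d) => x i₀) ?_ ?_
  · simpa using (Nat.le_self_pow hd.ne' (N + 1)).trans_lt (by omega)
  have hfamily : F ∘ u - F ∘ (-u) = fun (k : Fin r) (x : EuclideanSpace ℝ (Fin d)) =>
      σ (((k : ℝ) + 1) * x i₀) - σ (-(((k : ℝ) + 1) * x i₀)) := by
    funext k x
    simp [F, u, EuclideanSpace.inner_single_left]
  simpa only [hfamily] using hli_elim.sub_of_sumElim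
end

section
/- Let σ : ℝ → ℝ be continuous and rapidly decreasing (as above), and let p_1, …, p_r be nonzero reals with |p_1| > |p_k| for all k ≥ 2. If α_1, …, α_r ∈ ℝ satisfy ∑_{k=1}^r α_k σ(p_k ε) = 0 for all ε ∈ ℝ, then α_1 = 0. -/
/-! Evaluating the relation at `ε = p j * t`, weighting by `α j * sign (p j)` and symmetrizing
in `(j, k)` cancels every term with `p j * p k < 0` and leaves
`∑ j k, α j * α k * (sign (p j) + sign (p k)) * σ (|p j * p k| * t) = 0`.
Dilations `t ↦ σ (c * t)` with distinct factors `c > 0` are linearly independent: divide by the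
term with the smallest factor and let `t → ∞`, since rapid decrease makes the ratios tend to `0`.
(Factors of both signs would not do: `σ t + σ (-t) = 0` for odd `σ`; this is why the negative
products are removed first.) The factor `|p 0|²` occurs only for `j = k = 0`, so
`2 * sign (p 0) * α 0 ^ 2 = 0`. -/

open Filter Topology Finset

def RapidlyDecreasing (σ : ℝ → ℝ) : Prop :=
  ∀ ε : ℝ, 0 < ε → ∃ M : ℝ, ∀ x y : ℝ,
    M ≤ |x| → M ≤ |y| → M ≤ |y| - |x| → |σ y| ≤ ε * |σ x|

lemma eventually_le_mul_atTop {a : ℝ} (ha : 0 < a) (M : ℝ) : ∀ᶠ t in atTop, M ≤ a * t :=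
  (tendsto_id.const_mul_atTop ha).eventually_ge_atTop M

namespace RapidlyDecreasing

variable {σ : ℝ → ℝ}

theorem tendsto_div_comp_mul (hσ : RapidlyDecreasing σ) {a c : ℝ} (ha : 0 < a) (hac : a < c) :
    Tendsto (fun t => σ (c * t) / σ (a * t)) atTop (𝓝 0) := by
  rw [Metric.tendsto_nhds]
  intro ε hε
  obtain ⟨M, hM⟩ := hσ (ε / 2) (half_pos hε)
  filter_upwards [eventually_le_mul_atTop ha M, eventually_le_mul_atTop (sub_pos.2 hac) M,
    eventually_gt_atTop 0] with t hat hct ht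
  have hle : |σ (c * t)| ≤ ε / 2 * |σ (a * t)| := by
    refine hM _ _ ?_ ?_ ?_ <;>
      simp only [abs_of_pos (mul_pos ha ht), abs_of_pos (mul_pos (ha.trans hac) ht)] <;>
      nlinarith
  rw [Real.dist_eq, sub_zero, abs_div]
  exact (div_le_of_le_mul₀ (abs_nonneg _) (half_pos hε).le hle).trans_lt (half_lt_self hε)

theorem eventually_ne_zero_comp_mul (hnz : ∃ M₀ : ℝ, ∀ x : ℝ, M₀ ≤ |x| → σ x ≠ 0) {a : ℝ}
    (ha : 0 < a) : ∀ᶠ t in atTop, σ (a * t) ≠ 0 := by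
  obtain ⟨M₀, hM₀⟩ := hnz
  filter_upwards [eventually_le_mul_atTop ha M₀] with t ht
  exact hM₀ _ (ht.trans (le_abs_self _))

theorem coeff_eq_zero_of_min (hσ : RapidlyDecreasing σ)
    (hnz : ∃ M₀ : ℝ, ∀ x : ℝ, M₀ ≤ |x| → σ x ≠ 0) {a : ℝ} (ha : 0 < a) {s : Finset ℝ}
    (hs : ∀ c ∈ s, a < c) (w : ℝ → ℝ)
    (h : ∀ᶠ t in atTop, w a * σ (a * t) + ∑ c ∈ s, w c * σ (c * t) = 0) : w a = 0 := by
  have hlim : Tendsto (fun t => w a + ∑ c ∈ s, w c * (σ (c * t) / σ (a * t))) atTop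
      (𝓝 (w a + ∑ c ∈ s, w c * 0)) :=
    tendsto_const_nhds.add <| tendsto_finsetSum _ fun c hc =>
      (hσ.tendsto_div_comp_mul ha (hs c hc)).const_mul (w c)
  simp only [mul_zero, sum_const_zero, add_zero] at hlim
  refine tendsto_nhds_unique (hlim.congr' ?_) tendsto_const_nhds
  filter_upwards [h, eventually_ne_zero_comp_mul hnz ha] with t ht hne
  calc w a + ∑ c ∈ s, w c * (σ (c * t) / σ (a * t))
      = (w a * σ (a * t) + ∑ c ∈ s, w c * σ (c * t)) / σ (a * t) := by
        simp only [add_div, mul_div_cancel_right₀ _ hne, sum_div, mul_div_assoc]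
    _ = 0 := by rw [ht, zero_div]

theorem coeff_eq_zero_of_sum_comp_mul (hσ : RapidlyDecreasing σ)
    (hnz : ∃ M₀ : ℝ, ∀ x : ℝ, M₀ ≤ |x| → σ x ≠ 0) (s : Finset ℝ) (hs : ∀ c ∈ s, 0 < c)
    (w : ℝ → ℝ) (h : ∀ᶠ t in atTop, ∑ c ∈ s, w c * σ (c * t) = 0) : ∀ c ∈ s, w c = 0 := by
  induction s using Finset.induction_on_min with
  | empty => simp
  | insert a s hmin ih =>
    have ha : 0 < a := hs a (mem_insert_self a s)
    have hnot : a ∉ s := fun has => lt_irrefl a (hmin a has)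
    simp only [sum_insert hnot] at h
    have hwa : w a = 0 := coeff_eq_zero_of_min hσ hnz ha hmin w h
    have hrest : ∀ c ∈ s, w c = 0 := by
      refine ih (fun c hc => hs c (mem_insert_of_mem hc)) ?_
      simpa only [hwa, zero_mul, zero_add] using h
    simpa only [forall_mem_insert] using ⟨hwa, hrest⟩

theorem sum_fiber_eq_zero {ι : Type*} [Fintype ι] (hσ : RapidlyDecreasing σ)
    (hnz : ∃ M₀ : ℝ, ∀ x : ℝ, M₀ ≤ |x| → σ x ≠ 0) (c : ι → ℝ) (hc : ∀ i, 0 < c i) (w : ι → ℝ)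
    (h : ∀ᶠ t in atTop, ∑ i, w i * σ (c i * t) = 0) (c₀ : ℝ) :
    ∑ i with c i = c₀, w i = 0 := by
  have hgroup : ∀ t, ∑ i, w i * σ (c i * t) =
      ∑ v ∈ univ.image c, (∑ i with c i = v, w i) * σ (v * t) := fun t => by
    rw [← sum_fiberwise_of_maps_to (fun i _ => mem_image_of_mem c (mem_univ i))]
    refine sum_congr rfl fun v _ => ?_
    rw [sum_mul]
    exact sum_congr rfl fun i hi => by rw [(mem_filter.1 hi).2]
  by_cases hc₀ : c₀ ∈ univ.image c
  · refine coeff_eq_zero_of_sum_comp_mul hσ hnz _ ?_ (fun v => ∑ i with c i = v, w i) ?_ c₀ hc₀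
    · simpa only [mem_image, mem_univ, true_and, forall_exists_index, forall_apply_eq_imp_iff]
        using hc
    · simpa only [hgroup] using h
  · refine sum_eq_zero fun i hi => absurd ?_ hc₀
    exact (mem_filter.1 hi).2 ▸ mem_image_of_mem c (mem_univ i)

end RapidlyDecreasing

theorem sign_add_sign_mul_comp_mul (f : ℝ → ℝ) (a b t : ℝ) :
    (Real.sign a + Real.sign b) * f (a * b * t) =
      (Real.sign a + Real.sign b) * f (|a * b| * t) := by
  rcases le_or_gt 0 (a * b) with hab | hab
  · rw [abs_of_nonneg hab]
  · rcases mul_neg_iff.1 hab with ⟨ha, hb⟩ | ⟨ha, hb⟩ <;>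
      simp [Real.sign_of_pos, Real.sign_of_neg, ha, hb]

theorem sum_sign_add_sign_mul_comp_abs_mul {ι : Type*} [Fintype ι] (f : ℝ → ℝ) (p α : ι → ℝ)
    (h : ∀ ε, ∑ k, α k * f (p k * ε) = 0) (t : ℝ) :
    ∑ jk : ι × ι, α jk.1 * α jk.2 * (Real.sign (p jk.1) + Real.sign (p jk.2)) *
      f (|p jk.1 * p jk.2| * t) = 0 := by
  have hleft : ∀ j, ∑ k, α k * f (p j * p k * t) = 0 := fun j => by
    simpa only [mul_comm (p j), mul_assoc] using h (p j * t)
  have hright : ∀ k, ∑ j, α j * f (p j * p k * t) = 0 := fun k => by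
    simpa only [mul_assoc] using h (p k * t)
  calc ∑ jk : ι × ι, α jk.1 * α jk.2 * (Real.sign (p jk.1) + Real.sign (p jk.2)) *
        f (|p jk.1 * p jk.2| * t)
      = ∑ j, α j * Real.sign (p j) * ∑ k, α k * f (p j * p k * t) +
          ∑ k, α k * Real.sign (p k) * ∑ j, α j * f (p j * p k * t) := by
        simp only [Fintype.sum_prod_type, mul_sum, sum_comm (γ := ι) (α := ι) (f := fun k j =>
          α k * Real.sign (p k) * (α j * f (p j * p k * t))), ← sum_add_distrib]
        refine sum_congr rfl fun j _ => sum_congr rfl fun k _ => ?_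
        rw [mul_assoc, ← sign_add_sign_mul_comp_mul]
        ring
    _ = 0 := by simp only [hleft, hright, mul_zero, sum_const_zero, add_zero]

theorem abs_mul_lt_abs_mul_self_of_ne {ι : Type*} {p : ι → ℝ} {i₀ : ι} (hp0 : ∀ k, p k ≠ 0)
    (hdom : ∀ k, k ≠ i₀ → |p k| < |p i₀|) {j k : ι} (hjk : (j, k) ≠ (i₀, i₀)) :
    |p j * p k| < |p i₀ * p i₀| := by
  have hle : ∀ k, |p k| ≤ |p i₀| := fun k => by
    rcases eq_or_ne k i₀ with rfl | hk
    exacts [le_rfl, (hdom k hk).le]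
  rw [abs_mul, abs_mul]
  by_cases hj : j = i₀
  · subst hj
    have hk : k ≠ j := fun hk => hjk (by rw [hk])
    exact mul_lt_mul' le_rfl (hdom k hk) (abs_nonneg _) (abs_pos.2 (hp0 j))
  · exact mul_lt_mul (hdom j hj) (hle k) (abs_pos.2 (hp0 k)) (abs_nonneg _)

theorem stmt6_general (σ : ℝ → ℝ)
    (hnz : ∃ M₀ : ℝ, ∀ x : ℝ, M₀ ≤ |x| → σ x ≠ 0)
    (hrapid : ∀ ε : ℝ, 0 < ε → ∃ M : ℝ, ∀ x y : ℝ,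
      M ≤ |x| → M ≤ |y| → M ≤ |y| - |x| → |σ y| ≤ ε * |σ x|)
    (r : ℕ) (hr : 0 < r) (p : Fin r → ℝ) (hp0 : ∀ k, p k ≠ 0)
    (hdom : ∀ k, k ≠ ⟨0, hr⟩ → |p k| < |p ⟨0, hr⟩|)
    (α : Fin r → ℝ) (h : ∀ ε : ℝ, ∑ k, α k * σ (p k * ε) = 0) :
    α ⟨0, hr⟩ = 0 := by
  set i₀ : Fin r := ⟨0, hr⟩
  have hfiber := RapidlyDecreasing.sum_fiber_eq_zero hrapid hnz
    (fun jk : Fin r × Fin r => |p jk.1 * p jk.2|)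
    (fun jk => abs_pos.2 (mul_ne_zero (hp0 jk.1) (hp0 jk.2))) _
    (Eventually.of_forall (sum_sign_add_sign_mul_comp_abs_mul σ p α h)) |p i₀ * p i₀|
  have htop : {jk ∈ (univ : Finset (Fin r × Fin r)) | |p jk.1 * p jk.2| = |p i₀ * p i₀|} =
      {(i₀, i₀)} := by
    ext jk
    simp only [mem_filter, mem_univ, true_and, mem_singleton]
    exact ⟨fun hjk => by_contra fun hne => (abs_mul_lt_abs_mul_self_of_ne hp0 hdom hne).ne hjk,
      fun hjk => by rw [hjk]⟩
  rw [htop, sum_singleton] at hfiber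
  have hsign : Real.sign (p i₀) + Real.sign (p i₀) ≠ 0 := by
    rcases (hp0 i₀).lt_or_gt with hneg | hpos
    · rw [Real.sign_of_neg hneg]; norm_num
    · rw [Real.sign_of_pos hpos]; norm_num
  simpa [hsign] using hfiber

theorem stmt6 (σ : ℝ → ℝ) (hcont : Continuous σ)
    (hnz : ∃ M₀ : ℝ, ∀ x : ℝ, M₀ ≤ |x| → σ x ≠ 0)
    (hrapid : ∀ ε : ℝ, 0 < ε → ∃ M : ℝ, ∀ x y : ℝ,
      M ≤ |x| → M ≤ |y| → M ≤ |y| - |x| → |σ y| ≤ ε * |σ x|)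
    (r : ℕ) (hr : 0 < r) (p : Fin r → ℝ) (hp0 : ∀ k, p k ≠ 0)
    (hdom : ∀ k, k ≠ ⟨0, hr⟩ → |p k| < |p ⟨0, hr⟩|)
    (α : Fin r → ℝ) (h : ∀ ε : ℝ, ∑ k, α k * σ (p k * ε) = 0) :
    α ⟨0, hr⟩ = 0 :=
  stmt6_general σ hnz hrapid r hr p hp0 hdom α h
end

section
/- Let f : ℝ^s × ℝ^d → ℝ be real analytic and suppose that for every z in a set E ⊆ ℝ^s, the map x ↦ f(z, x) is not identically zero. Then for almost every x ∈ ℝ^d, the set {z ∈ E : f(z, x) = 0} is contained in the zero set of a nonzero analytic function of z; moreover, given n > s prescribed points x_1, …, x_n ∈ ℝ^d and ε > 0, there exist x_1', …, x_n' with |x_i' − x_i| < ε such that {z ∈ E : f(z, x_1') = ⋯ = f(z, x_n') = 0} is empty. -/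
/-!
Everything rests on a dimension count: for `U ⊆ ℝ^σ` open and `f` analytic on `U × ℝ^d` with no
`f (z, ·)` identically zero, the `n`-tuples of points sharing a common zero `z ∈ U` form a null set
as soon as `n > σ`, so every box around a tuple contains a tuple outside it. The count goes by
induction on `σ` with Fubini in the first point `x₀`. For almost every `x₀`, `f (·, x₀)` vanishes
nowhere on a countable dense subset of `U`, hence is nowhere locally zero; stratifying its zeros by
their order of vanishing, the analytic implicit function theorem covers them by countably many
analytic images of open subsets of `ℝ^(σ-1)`, and on each such patch the remaining `n - 1 > σ - 1`
points fall under the induction hypothesis.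

For the almost-everywhere statement it suffices that an analytic function that is not identically
zero has a null zero set: Fubini again, down to the isolated zeros of a function of one variable.
-/

open MeasureTheory Set Topology Filter

theorem IsSigmaCompact.measurableSet {X : Type*} [TopologicalSpace X] [T2Space X]
    [MeasurableSpace X] [OpensMeasurableSpace X] {s : Set X} (hs : IsSigmaCompact s) :
    MeasurableSet s := by
  obtain ⟨K, hK, rfl⟩ := hs
  exact .iUnion fun n => (hK n).measurableSet

theorem measurableSet_setOf_exists_forall_eq_zero {Z Y : Type*} [TopologicalSpace Z]
    [LocallyCompactSpace Z] [SecondCountableTopology Z]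
    [TopologicalSpace Y] [SigmaCompactSpace Y] [SecondCountableTopology Y] [T2Space Y]
    [MeasurableSpace Y] [OpensMeasurableSpace Y]
    {n : ℕ} {U : Set Z} (hU : IsOpen U) {f : Z × Y → ℝ}
    (hf : ContinuousOn f (U ×ˢ univ)) :
    MeasurableSet {x : Fin n → Y | ∃ z ∈ U, ∀ i, f (z, x i) = 0} := by
  have : LocallyCompactSpace U := hU.locallyCompactSpace
  have hC : IsClosed {p : U × (Fin n → Y) | ∀ i, f (p.1, p.2 i) = 0} := by
    simp only [ofPred_forall]
    refine isClosed_iInter fun i => isClosed_eq ?_ continuous_const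
    exact hf.comp_continuous (continuous_subtype_val.comp continuous_fst |>.prodMk
      ((continuous_apply (A := fun _ : Fin n => Y) i).comp continuous_snd))
      fun p => ⟨p.1.2, mem_univ _⟩
  convert ((isSigmaCompact_univ.of_isClosed_subset hC (subset_univ _)).image
    continuous_snd).measurableSet using 1
  ext x
  simp

theorem volume_eq_zero_of_ae_volume_cons_preimage {X : Type*} [MeasureSpace X]
    [SigmaFinite (volume : Measure X)] {m : ℕ} {B : Set (Fin (m + 1) → X)}
    (hB : MeasurableSet B)
    (h : ∀ᵐ x₀ : X, volume {x : Fin m → X | (Fin.cons x₀ x : Fin (m + 1) → X) ∈ B} = 0) :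
    volume B = 0 := by
  set e := MeasurableEquiv.piFinSuccAbove (fun _ : Fin (m + 1) => X) 0
  have he := volume_preserving_piFinSuccAbove (fun _ : Fin (m + 1) => X) 0
  rw [← he.symm.measure_preimage_equiv, Measure.volume_eq_prod,
    Measure.measure_prod_null (e.symm.measurable hB)]
  filter_upwards [h] with x₀ hx₀
  simp only [e, MeasurableEquiv.piFinSuccAbove_symm_apply, Fin.insertNthEquiv,
    Equiv.coe_fn_mk, Fin.insertNth_zero', Pi.zero_apply]
  exact hx₀

theorem AnalyticOnNhd.countable_setOf_eq_zero {𝕜 E : Type*} [NontriviallyNormedField 𝕜]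
    [SecondCountableTopology 𝕜] [NormedAddCommGroup E] [NormedSpace 𝕜 E] {f : 𝕜 → E}
    {U : Set 𝕜} (hf : AnalyticOnNhd 𝕜 f U) (hU : IsPreconnected U) (hne : ¬ EqOn f 0 U) :
    {z ∈ U | f z = 0}.Countable := by
  have hcod := (hf.eqOn_zero_or_eventually_ne_zero_of_preconnected hU).resolve_left hne
  have := (HereditarilyLindelofSpace.isLindelof _).countable_of_isDiscrete
    (isDiscrete_of_codiscreteWithin (s := {z | f z = 0}) hcod)
  refine Set.Countable.mono ?_ this
  exact fun z hz => ⟨hz.2, hz.1⟩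

theorem AnalyticOnNhd.comp_finCons {𝕜 F : Type*} [NontriviallyNormedField 𝕜]
    [NormedAddCommGroup F] [NormedSpace 𝕜 F] {m : ℕ} {g : (Fin (m + 1) → 𝕜) → F}
    (hg : AnalyticOnNhd 𝕜 g univ) :
    AnalyticOnNhd 𝕜 (fun p : 𝕜 × (Fin m → 𝕜) => g (Fin.cons p.1 p.2)) univ :=
  hg.comp (ContinuousLinearMap.analyticOnNhd
    (Fin.consEquivL 𝕜 fun _ : Fin (m + 1) => 𝕜 : 𝕜 × (Fin m → 𝕜) →L[𝕜] Fin (m + 1) → 𝕜) univ)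
    (mapsTo_univ _ _)

theorem AnalyticOnNhd.ae_ne_zero {m : ℕ} {g : (Fin m → ℝ) → ℝ} (hg : AnalyticOnNhd ℝ g univ)
    {z₀ : Fin m → ℝ} (hz₀ : g z₀ ≠ 0) : ∀ᵐ z, g z ≠ 0 := by
  induction m with
  | zero => exact .of_forall fun z => Subsingleton.elim z z₀ ▸ hz₀
  | succ m ih =>
    have hcons := hg.comp_finCons
    have hfirst : ∀ᵐ t : ℝ, g (Fin.cons t (Fin.tail z₀)) ≠ 0 := by
      have hcount : {t ∈ univ | g (Fin.cons t (Fin.tail z₀)) = 0}.Countable :=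
        (hcons.comp (analyticOnNhd_id.prod analyticOnNhd_const) (mapsTo_univ _ _)
          |>.countable_setOf_eq_zero isPreconnected_univ fun h =>
            hz₀ (by rw [← Fin.cons_self_tail z₀]; exact h (mem_univ (z₀ 0))))
      simpa [ae_iff] using hcount.measure_zero volume
    simp only [ae_iff, not_not]
    refine volume_eq_zero_of_ae_volume_cons_preimage
      (measurableSet_eq_fun hg.continuous.measurable measurable_const) ?_
    filter_upwards [hfirst] with t ht
    simpa [ae_iff] using ih (hcons.comp (analyticOnNhd_const.prod analyticOnNhd_id)
      (mapsTo_univ _ _)) ht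

section Strata

variable {𝕜 E F : Type*} [NontriviallyNormedField 𝕜] [NormedAddCommGroup E] [NormedSpace 𝕜 E]
  [NormedAddCommGroup F] [NormedSpace 𝕜 F] [CompleteSpace F]

theorem AnalyticAt.exists_iteratedFDeriv_ne_zero [CharZero 𝕜] {g : E → F} {z : E}
    (hg : AnalyticAt 𝕜 g z) (hne : ¬ ∀ᶠ y in 𝓝 z, g y = 0) :
    ∃ k, iteratedFDeriv 𝕜 k g z ≠ 0 := by
  by_contra! h
  obtain ⟨p, r, hp⟩ := hg
  refine hne ?_
  filter_upwards [Metric.eball_mem_nhds z hp.r_pos] with y hy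
  have hyz : y - z ∈ Metric.eball (0 : E) r := by
    rwa [Metric.mem_eball, ← edist_sub_right y z z, sub_self] at hy
  have hsum := hp.hasSum_iteratedFDeriv hyz
  simp only [h, zero_apply, smul_zero, add_sub_cancel] at hsum
  exact hsum.unique hasSum_zero

theorem AnalyticAt.exists_fderiv_ne_zero_of_iteratedFDeriv_succ_ne_zero {g : E → F} {z : E}
    (hg : AnalyticAt 𝕜 g z) {k : ℕ} (hk : iteratedFDeriv 𝕜 (k + 1) g z ≠ 0) :
    ∃ h : E → F, AnalyticAt 𝕜 h z ∧ fderiv 𝕜 h z ≠ 0 ∧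
      ∀ y, iteratedFDeriv 𝕜 k g y = 0 → h y = 0 := by
  obtain ⟨v, hv⟩ : ∃ v, iteratedFDeriv 𝕜 (k + 1) g z v ≠ 0 := by
    by_contra! h
    exact hk (ContinuousMultilinearMap.ext h)
  obtain ⟨s, hs, hsa⟩ := hg.exists_mem_nhds_analyticOnNhd
  have hD : AnalyticAt 𝕜 (iteratedFDeriv 𝕜 k g) z := hsa.iteratedFDeriv k z (mem_of_mem_nhds hs)
  set L := ContinuousMultilinearMap.apply 𝕜 (fun _ : Fin k => E) F (Fin.tail v)
  refine ⟨fun y => L (iteratedFDeriv 𝕜 k g y), (L.analyticAt _).comp hD, fun h0 => hv ?_,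
    fun y hy => by simp [hy]⟩
  have hL := (L.hasFDerivAt.comp z hD.differentiableAt.hasFDerivAt).fderiv
  have h1 : (L.comp (fderiv 𝕜 (iteratedFDeriv 𝕜 k g) z)) (v 0) = 0 := by
    rw [← hL]; exact DFunLike.congr_fun h0 (v 0)
  rw [iteratedFDeriv_succ_apply_left]
  simpa [L] using h1

end Strata

theorem ContinuousLinearMap.exists_continuousLinearEquiv_prod_eq {𝕜 : Type*}
    [NontriviallyNormedField 𝕜] [CompleteSpace 𝕜] {τ : ℕ}
    {D : (Fin (τ + 1) → 𝕜) →L[𝕜] 𝕜} (hD : D ≠ 0) :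
    ∃ P : (Fin (τ + 1) → 𝕜) →L[𝕜] (Fin τ → 𝕜), ∃ e : (Fin (τ + 1) → 𝕜) ≃L[𝕜] 𝕜 × (Fin τ → 𝕜),
      (e : (Fin (τ + 1) → 𝕜) →L[𝕜] 𝕜 × (Fin τ → 𝕜)) = D.prod P := by
  obtain ⟨j, hj⟩ : ∃ j, D (Pi.single j 1) ≠ 0 := by
    by_contra! h
    exact hD (coe_injective ((Pi.basisFun 𝕜 _).ext fun j => by simpa using h j))
  set P : (Fin (τ + 1) → 𝕜) →L[𝕜] (Fin τ → 𝕜) := .pi fun k => .proj (j.succAbove k)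
  have hinj : Function.Injective (D.prod P) := by
    rw [← ContinuousLinearMap.coe_coe, ← LinearMap.ker_eq_bot, LinearMap.ker_eq_bot']
    intro z hz
    have hPz : ∀ k, z (j.succAbove k) = 0 := fun k => congrFun (congrArg Prod.snd hz) k
    have hz_single : z = Pi.single j (z j) := by
      ext q
      rcases j.eq_self_or_eq_succAbove q with rfl | ⟨k, rfl⟩
      · simp
      · simp [hPz k, Fin.succAbove_ne]
    have hDz : z j * D (Pi.single j 1) = 0 := by
      rw [← smul_eq_mul, ← map_smul, ← Pi.single_smul, smul_eq_mul, mul_one, ← hz_single]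
      exact congrArg Prod.fst hz
    rw [hz_single, (mul_eq_zero.1 hDz).resolve_right hj, Pi.single_zero]
  refine ⟨P, (LinearMap.linearEquivOfInjective _ hinj (by simp [add_comm])).toContinuousLinearEquiv,
    ?_⟩
  ext <;> rfl

section Chart

variable {𝕜 E G : Type*} [NontriviallyNormedField 𝕜] [NormedAddCommGroup E] [NormedSpace 𝕜 E]
  [CompleteSpace E] [NormedAddCommGroup G] [NormedSpace 𝕜 G]

theorem AnalyticAt.exists_analyticOnNhd_eventually_mem_image_of_eq_zero {h : E → 𝕜} {z₀ : E}
    (hh : AnalyticAt 𝕜 h z₀) (P : E →L[𝕜] G) (e : E ≃L[𝕜] 𝕜 × G)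
    (he : (e : E →L[𝕜] 𝕜 × G) = (fderiv 𝕜 h z₀).prod P) :
    ∃ U : Set G, ∃ ψ : G → E, IsOpen U ∧ AnalyticOnNhd 𝕜 ψ U ∧
      ∀ᶠ z in 𝓝 z₀, h z = 0 → z ∈ ψ '' U := by
  -- `F` is a local analytic diffeomorphism at `z₀`, and a zero `z` of `h` is `Φ.symm (0, P z)`.
  set F : E → 𝕜 × G := fun z => (h z, P z)
  have hF : AnalyticAt 𝕜 F z₀ := hh.prod (P.analyticAt z₀)
  have hFd : fderiv 𝕜 F z₀ = e := by
    rw [he]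
    exact (hh.differentiableAt.hasFDerivAt.prodMk P.hasFDerivAt).fderiv
  have hstrict : HasStrictFDerivAt F (e : E →L[𝕜] 𝕜 × G) z₀ := hFd ▸ hF.hasStrictFDerivAt
  set Φ := hstrict.toOpenPartialHomeomorph F
  have hsrc : z₀ ∈ Φ.source := hstrict.mem_toOpenPartialHomeomorph_source
  obtain ⟨s, hs, hsa⟩ := (Φ.analyticAt_symm' hsrc hF hFd).exists_mem_nhds_analyticOnNhd
  refine ⟨(fun w => ((0 : 𝕜), w)) ⁻¹' interior s, fun w => Φ.symm (0, w),
    isOpen_interior.preimage (continuous_const.prodMk continuous_id),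
    hsa.comp (analyticOnNhd_const.prod analyticOnNhd_id) fun w hw => interior_subset hw, ?_⟩
  filter_upwards [Φ.open_source.mem_nhds hsrc,
    hF.continuousAt.preimage_mem_nhds (interior_mem_nhds.2 hs)] with z hz hzs hz0
  have hFz : F z = (0, P z) := by simp [F, hz0]
  exact ⟨P z, by simpa [hFz] using hzs, by simpa [Φ, hFz] using Φ.left_inv hz⟩

end Chart

section Patches

variable (𝕜 : Type*) [NontriviallyNormedField 𝕜] {E : Type*} [NormedAddCommGroup E]
  [NormedSpace 𝕜 E] (G : Type*) [NormedAddCommGroup G] [NormedSpace 𝕜 G]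

def CoveredByAnalyticPatches (V Z : Set E) : Prop :=
  ∃ S : Set (Set G × (G → E)), S.Countable ∧
    (∀ p ∈ S, IsOpen p.1 ∧ AnalyticOnNhd 𝕜 p.2 p.1 ∧ MapsTo p.2 p.1 V) ∧
    Z ⊆ ⋃ p ∈ S, p.2 '' p.1

variable {𝕜 G} {V Z : Set E}

theorem CoveredByAnalyticPatches.mono {Z' : Set E} (h : CoveredByAnalyticPatches 𝕜 G V Z)
    (hZ' : Z' ⊆ Z) : CoveredByAnalyticPatches 𝕜 G V Z' :=
  let ⟨S, hS, hSp, hZ⟩ := h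
  ⟨S, hS, hSp, hZ'.trans hZ⟩

theorem coveredByAnalyticPatches_of_subset_image {U : Set G} {ψ : G → E} (hU : IsOpen U)
    (hψ : AnalyticOnNhd 𝕜 ψ U) (hψV : MapsTo ψ U V) (hZ : Z ⊆ ψ '' U) :
    CoveredByAnalyticPatches 𝕜 G V Z :=
  ⟨{(U, ψ)}, countable_singleton _, by simp [hU, hψ, hψV], by simpa using hZ⟩

theorem coveredByAnalyticPatches_iUnion {ι : Type*} [Countable ι] {Z : ι → Set E}
    (h : ∀ i, CoveredByAnalyticPatches 𝕜 G V (Z i)) :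
    CoveredByAnalyticPatches 𝕜 G V (⋃ i, Z i) := by
  choose S hS hSp hZ using h
  refine ⟨⋃ i, S i, countable_iUnion hS, fun p hp => ?_, ?_⟩
  · obtain ⟨i, hi⟩ := mem_iUnion.1 hp
    exact hSp i p hi
  exact iUnion_subset fun i => (hZ i).trans (biUnion_subset_biUnion_left (subset_iUnion S i))

theorem coveredByAnalyticPatches_of_forall_nhds [SecondCountableTopology E]
    (h : ∀ z ∈ Z, ∃ W ∈ 𝓝 z, CoveredByAnalyticPatches 𝕜 G V (Z ∩ W)) :
    CoveredByAnalyticPatches 𝕜 G V Z := by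
  choose! W hW hcov using h
  obtain ⟨t, htZ, htc, hZt⟩ :=
    TopologicalSpace.countable_cover_nhdsWithin fun z hz => mem_nhdsWithin_of_mem_nhds (hW z hz)
  have := htc.to_subtype
  refine (coveredByAnalyticPatches_iUnion fun z : t => hcov z (htZ z.2)).mono fun z hz => ?_
  obtain ⟨x, hx, hzx⟩ := mem_iUnion₂.1 (hZt hz)
  exact mem_iUnion.2 ⟨⟨x, hx⟩, hz, hzx⟩

end Patches

theorem coveredByAnalyticPatches_setOf_eq_zero {τ : ℕ} {V : Set (Fin (τ + 1) → ℝ)}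
    (hV : IsOpen V) {g : (Fin (τ + 1) → ℝ) → ℝ} (hg : AnalyticOnNhd ℝ g V)
    (hloc : ∀ z ∈ V, ¬ ∀ᶠ y in 𝓝 z, g y = 0) :
    CoveredByAnalyticPatches ℝ (Fin τ → ℝ) V {z ∈ V | g z = 0} := by
  -- On the `k`-th stratum some component of the `k`-th derivative of `g` vanishes identically
  -- while its own derivative does not, so the implicit function chart applies to it.
  have hstrata : {z ∈ V | g z = 0} ⊆ ⋃ k, {z ∈ V | iteratedFDeriv ℝ k g z = 0 ∧
      iteratedFDeriv ℝ (k + 1) g z ≠ 0} := by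
    rintro z ⟨hzV, hz⟩
    by_contra! hall
    simp only [mem_iUnion, mem_ofPred_eq, not_exists, not_and, not_not] at hall
    obtain ⟨k, hk⟩ := (hg z hzV).exists_iteratedFDeriv_ne_zero (hloc z hzV)
    refine hk (Nat.rec ?_ (fun k hk => hall k hzV hk) k)
    ext v
    simp [hz]
  refine (coveredByAnalyticPatches_iUnion fun k => coveredByAnalyticPatches_of_forall_nhds ?_).mono
    hstrata
  rintro z ⟨hzV, -, hk⟩
  obtain ⟨h, hh, hd, hvan⟩ := (hg z hzV).exists_fderiv_ne_zero_of_iteratedFDeriv_succ_ne_zero hk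
  obtain ⟨P, e, he⟩ := ContinuousLinearMap.exists_continuousLinearEquiv_prod_eq hd
  obtain ⟨U, ψ, hU, hψ, hzero⟩ := hh.exists_analyticOnNhd_eventually_mem_image_of_eq_zero P e he
  refine ⟨_, inter_mem hzero (hV.mem_nhds hzV), coveredByAnalyticPatches_of_subset_image
    (hψ.continuousOn.isOpen_inter_preimage hU hV) (hψ.mono inter_subset_left)
    (fun w hw => hw.2) ?_⟩
  rintro y ⟨⟨hyV, hyk, -⟩, hyψ, -⟩
  obtain ⟨w, hw, rfl⟩ := hyψ (hvan y hyk)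
  exact ⟨w, ⟨hw, hyV⟩, rfl⟩

theorem volume_setOf_exists_forall_eq_zero_of_slice {σ d m : ℕ} {U : Set (Fin σ → ℝ)}
    (hU : IsOpen U) {f : (Fin σ → ℝ) × (Fin d → ℝ) → ℝ} (hf : AnalyticOnNhd ℝ f (U ×ˢ univ))
    (hfU : ∀ z ∈ U, ∃ y, f (z, y) ≠ 0)
    (h : ∀ x₀, (∀ z ∈ U, ¬ ∀ᶠ y in 𝓝 z, f (y, x₀) = 0) →
      volume {x : Fin m → Fin d → ℝ | ∃ z ∈ U, f (z, x₀) = 0 ∧ ∀ i, f (z, x i) = 0} = 0) :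
    volume {x : Fin (m + 1) → Fin d → ℝ | ∃ z ∈ U, ∀ i, f (z, x i) = 0} = 0 := by
  refine volume_eq_zero_of_ae_volume_cons_preimage
    (measurableSet_setOf_exists_forall_eq_zero hU hf.continuousOn) ?_
  obtain ⟨Q, hQc, hQd⟩ := TopologicalSpace.exists_countable_dense U
  have hQ : ∀ᵐ x₀, ∀ q ∈ Q, f (q, x₀) ≠ 0 := (ae_ball_iff hQc).2 fun q _ =>
    have ⟨y, hy⟩ := hfU q q.2
    (hf.curry_right.mono fun _ _ => ⟨q.2, mem_univ _⟩).ae_ne_zero hy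
  filter_upwards [hQ] with x₀ hx₀
  refine measure_mono_null ?_ (h x₀ fun z hz hzero => ?_)
  · rintro x ⟨z, hz, hzero⟩
    exact ⟨z, hz, by simpa using hzero 0, fun i => by simpa using hzero i.succ⟩
  · have : ∀ᶠ q : U in 𝓝 ⟨z, hz⟩, f (q, x₀) = 0 :=
      Tendsto.eventually (p := fun y => f (y, x₀) = 0) continuousAt_subtype_val hzero
    obtain ⟨t, ht, hzt⟩ := this.exists_mem
    obtain ⟨q, hqt, hqQ⟩ := mem_closure_iff_nhds.1 (hQd ⟨z, hz⟩) t ht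
    exact hx₀ q hqQ (hzt q hqt)

theorem volume_setOf_exists_forall_eq_zero {σ d n : ℕ} (hn : σ < n) {U : Set (Fin σ → ℝ)}
    (hU : IsOpen U) {f : (Fin σ → ℝ) × (Fin d → ℝ) → ℝ} (hf : AnalyticOnNhd ℝ f (U ×ˢ univ))
    (hfU : ∀ z ∈ U, ∃ y, f (z, y) ≠ 0) :
    volume {x : Fin n → Fin d → ℝ | ∃ z ∈ U, ∀ i, f (z, x i) = 0} = 0 := by
  induction σ generalizing n with
  | zero =>
    obtain ⟨m, rfl⟩ : ∃ m, n = m + 1 := Nat.exists_eq_add_one.2 hn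
    refine volume_setOf_exists_forall_eq_zero_of_slice hU hf hfU fun x₀ hloc => ?_
    -- `Fin 0 → ℝ` is a point, so a zero of `f (·, x₀)` in `U` would be a local one.
    convert measure_empty (μ := volume)
    refine eq_empty_of_forall_notMem fun x ⟨z, hz, hzero, _⟩ => hloc z hz ?_
    exact .of_forall fun y => Subsingleton.elim y z ▸ hzero
  | succ τ ih =>
    obtain ⟨m, rfl⟩ : ∃ m, n = m + 1 := Nat.exists_eq_add_one.2 (by omega)
    refine volume_setOf_exists_forall_eq_zero_of_slice hU hf hfU fun x₀ hloc => ?_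
    obtain ⟨S, hSc, hS, hcov⟩ :=
      coveredByAnalyticPatches_setOf_eq_zero hU
        (hf.curry_left.mono fun _ hz => ⟨hz, mem_univ _⟩) hloc
    have hpatch : ∀ p ∈ S,
        volume {x : Fin m → Fin d → ℝ | ∃ w ∈ p.1, ∀ i, f (p.2 w, x i) = 0} = 0 := by
      rintro ⟨U', ψ⟩ hp
      obtain ⟨hU', hψ, hψU⟩ := hS _ hp
      refine ih (by omega) hU' (f := fun q => f (ψ q.1, q.2)) ?_ fun w hw => hfU _ (hψU hw)
      exact hf.comp ((hψ.comp analyticOnNhd_fst fun q hq => hq.1).prod analyticOnNhd_snd)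
        fun q hq => ⟨hψU hq.1, mem_univ _⟩
    refine measure_mono_null ?_ ((measure_biUnion_null_iff hSc).2 hpatch)
    rintro x ⟨z, hz, hzx₀, hzx⟩
    obtain ⟨p, hp, w, hw, rfl⟩ := mem_iUnion₂.1 (hcov ⟨hz, hzx₀⟩)
    exact mem_iUnion₂.2 ⟨p, hp, w, hw, hzx⟩

open MeasureTheory in
theorem stmt11 (s d : ℕ) (f : ((Fin s → ℝ) × (Fin d → ℝ)) → ℝ)
    (hf : AnalyticOnNhd ℝ f Set.univ) (E : Set (Fin s → ℝ))
    (hE : ∀ z ∈ E, ∃ x, f (z, x) ≠ 0) :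
    (∀ᵐ x : Fin d → ℝ, ∃ g : (Fin s → ℝ) → ℝ, AnalyticOnNhd ℝ g Set.univ ∧
        (∃ z, g z ≠ 0) ∧ ∀ z ∈ E, f (z, x) = 0 → g z = 0) ∧
    ∀ n : ℕ, s < n → ∀ x : Fin n → (Fin d → ℝ), ∀ ε : ℝ, 0 < ε →
      ∃ x' : Fin n → (Fin d → ℝ), (∀ i, dist (x' i) (x i) < ε) ∧
        ∀ z ∈ E, ∃ i, f (z, x' i) ≠ 0 := by
  have hslice : ∀ y, AnalyticOnNhd ℝ (fun z => f (z, y)) univ := fun y =>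
    hf.curry_left.mono fun _ _ => mem_univ _
  constructor
  · rcases E.eq_empty_or_nonempty with rfl | ⟨z₀, hz₀⟩
    · exact .of_forall fun _ => ⟨fun _ => 1, analyticOnNhd_const, ⟨0, one_ne_zero⟩, by simp⟩
    obtain ⟨y₀, hy₀⟩ := hE z₀ hz₀
    filter_upwards [(hf.curry_right.mono fun _ _ => mem_univ _).ae_ne_zero hy₀] with x hx
    exact ⟨fun z => f (z, x), hslice x, ⟨z₀, hx⟩, fun _ _ => id⟩
  · intro n hn x ε hε
    set V := {z | ∃ y, f (z, y) ≠ 0}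
    have hV : IsOpen V := by
      simp only [V, ofPred_exists]
      exact isOpen_iUnion fun y => isOpen_ne_fun (hslice y).continuous
        continuous_const
    have hnull := volume_setOf_exists_forall_eq_zero (n := n) hn hV
      (hf.mono (subset_univ _)) fun z hz => hz
    obtain ⟨x', hx'ε, hx'⟩ : (Metric.ball x ε \ _).Nonempty := nonempty_iff_ne_empty.2 fun h =>
      Metric.isOpen_ball.measure_ne_zero volume (Metric.nonempty_ball.2 hε)
        (measure_mono_null (sdiff_eq_empty.1 h) hnull)
    refine ⟨x', (dist_pi_lt_iff hε).1 hx'ε, fun z hz => ?_⟩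
    by_contra! h
    exact hx' ⟨z, hE z hz, h⟩
end

section
/- Let y : [T, ∞) → ℝ be C^1 with y(t) → 0, and suppose there are λ > 0 and D_1, μ_1 > 0 such that |ẏ(t)| ≥ (λ/2)|y(t)| and |y(ζ)| ≥ D_1 |y(t)| e^{−μ_1(ζ−t)} for all ζ ≥ t > T, with y monotone of constant sign on (T,∞). Then there is a constant C > 0 such that ∫_t^∞ y(ζ)^2 dζ ≤ C y(t)^2 for all t > T. -/
/-!
A monotone function tending to `0` lies below `0` and increases (an antitone one the reverse), so
`y` and `y'` have opposite signs and the bound on `|y'|` reads `(y²)' = 2 y y' ≤ -λ y²`.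
Integrating over `[t, b]` gives `λ ∫_t^b y² ≤ y(t)² - y(b)² ≤ y(t)²`, so `C = 1/λ` works.
-/

open Set Filter Topology MeasureTheory

theorem MonotoneOn.le_of_tendsto_atTop {α β : Type*} [Preorder α] [IsDirectedOrder α] [Nonempty α]
    [TopologicalSpace β] [Preorder β] [OrderClosedTopology β] {f : α → β} {a : α} {l : β}
    (hf : MonotoneOn f (Ici a)) (hlim : Tendsto f atTop (𝓝 l)) : f a ≤ l :=
  ge_of_tendsto hlim <| by
    filter_upwards [eventually_ge_atTop a] with b hb using hf self_mem_Ici hb hb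

theorem AntitoneOn.le_of_tendsto_atTop {α β : Type*} [Preorder α] [IsDirectedOrder α] [Nonempty α]
    [TopologicalSpace β] [Preorder β] [OrderClosedTopology β] {f : α → β} {a : α} {l : β}
    (hf : AntitoneOn f (Ici a)) (hlim : Tendsto f atTop (𝓝 l)) : l ≤ f a :=
  le_of_tendsto hlim <| by
    filter_upwards [eventually_ge_atTop a] with b hb using hf self_mem_Ici hb hb

theorem mul_deriv_nonpos_of_tendsto_zero {y : ℝ → ℝ} {T x : ℝ}
    (hmono : MonotoneOn y (Ioi T) ∨ AntitoneOn y (Ioi T)) (hlim : Tendsto y atTop (𝓝 0))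
    (hx : x ∈ Ioi T) : y x * deriv y x ≤ 0 := by
  have hIci : Ici x ⊆ Ioi T := Ici_subset_Ioi.2 hx
  rw [← derivWithin_of_isOpen isOpen_Ioi hx]
  rcases hmono with hm | ha
  · exact mul_nonpos_of_nonpos_of_nonneg ((hm.mono hIci).le_of_tendsto_atTop hlim)
      hm.derivWithin_nonneg
  · exact mul_nonpos_of_nonneg_of_nonpos ((ha.mono hIci).le_of_tendsto_atTop hlim)
      ha.derivWithin_nonpos

theorem sq_mul_le_neg_two_mul_of_half_abs_le {c u v : ℝ} (hcuv : c / 2 * |u| ≤ |v|)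
    (huv : u * v ≤ 0) : c * u ^ 2 ≤ -(2 * u * v) :=
  calc c * u ^ 2 = 2 * (c / 2 * |u|) * |u| := by rw [← sq_abs u]; ring
    _ ≤ 2 * |v| * |u| := by gcongr
    _ = -(2 * u * v) := by rw [mul_assoc, mul_comm |v|, ← abs_mul, abs_of_nonpos huv]; ring

theorem setIntegral_Ioi_le_of_forall_intervalIntegral_le {f : ℝ → ℝ} {a C : ℝ}
    (hloc : ∀ b, IntegrableOn f (Ioc a b)) (hnonneg : ∀ x ∈ Ioi a, 0 ≤ f x)
    (hC : ∀ b, a ≤ b → ∫ x in a..b, f x ≤ C) : ∫ x in Ioi a, f x ≤ C := by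
  have hbounded : ∀ᶠ b in atTop, ∫ x in a..b, f x ≤ C := eventually_ge_atTop a |>.mono hC
  have hint : IntegrableOn f (Ioi a) := by
    refine integrableOn_Ioi_of_intervalIntegral_norm_bounded C a hloc tendsto_id ?_
    filter_upwards [hbounded, eventually_ge_atTop a] with b hb hab
    rwa [intervalIntegral.integral_of_le hab, setIntegral_congr_fun measurableSet_Ioc
      fun x hx ↦ Real.norm_of_nonneg (hnonneg x hx.1), ← intervalIntegral.integral_of_le hab]
  exact le_of_tendsto (intervalIntegral_tendsto_integral_Ioi a hint tendsto_id) hbounded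

theorem setIntegral_Ioi_le_div_of_le_neg_deriv {f f' : ℝ → ℝ} {a c : ℝ} (hc : 0 < c)
    (hf : ContinuousOn f (Ici a)) (hderiv : ∀ x ∈ Ioi a, HasDerivAt f (f' x) x)
    (hnonneg : ∀ x ∈ Ici a, 0 ≤ f x) (hdecay : ∀ x ∈ Ioi a, c * f x ≤ -f' x) :
    ∫ x in Ioi a, f x ≤ f a / c := by
  refine setIntegral_Ioi_le_of_forall_intervalIntegral_le
    (fun b ↦ (hf.mono Icc_subset_Ici_self).integrableOn_Icc.mono_set Ioc_subset_Icc_self)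
    (fun x hx ↦ hnonneg x (mem_Ici_of_Ioi hx)) fun b hab ↦ ?_
  have hfab : ContinuousOn f (Icc a b) := hf.mono Icc_subset_Ici_self
  have hint : ∫ x in a..b, c * f x ≤ -f b - -f a :=
    intervalIntegral.integral_le_sub_of_hasDeriv_right_of_le hab hfab.neg
      (fun x hx ↦ (hderiv x hx.1).neg.hasDerivWithinAt) (hfab.integrableOn_Icc.const_mul c)
      fun x hx ↦ hdecay x hx.1
  rw [intervalIntegral.integral_const_mul] at hint
  rw [le_div_iff₀ hc]
  linarith [hnonneg b hab]

open MeasureTheory in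
theorem stmt18_general (T : ℝ) (y : ℝ → ℝ) (hy : ContDiffOn ℝ 1 y (Set.Ioi T))
    (hlim : Filter.Tendsto y Filter.atTop (nhds 0))
    (lam : ℝ) (hlam : 0 < lam)
    (hder : ∀ t ∈ Set.Ioi T, lam / 2 * |y t| ≤ |deriv y t|)
    (hmono : MonotoneOn y (Set.Ioi T) ∨ AntitoneOn y (Set.Ioi T)) :
    ∃ C : ℝ, 0 < C ∧ ∀ t : ℝ, T < t → ∫ ζ in Set.Ioi t, (y ζ) ^ 2 ≤ C * (y t) ^ 2 := by
  have hderiv : ∀ s ∈ Ioi T, HasDerivAt y (deriv y s) s := fun s hs ↦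
    ((hy.contDiffAt (isOpen_Ioi.mem_nhds hs)).differentiableAt one_ne_zero).hasDerivAt
  refine ⟨1 / lam, by positivity, fun t ht ↦ ?_⟩
  have hIci : Ici t ⊆ Ioi T := Ici_subset_Ioi.2 ht
  rw [one_div_mul_eq_div]
  refine setIntegral_Ioi_le_div_of_le_neg_deriv (f' := fun s ↦ 2 * y s * deriv y s) hlam
    ((hy.continuousOn.mono hIci).pow 2) (fun s hs ↦ ?_) (fun _ _ ↦ sq_nonneg _) fun s hs ↦ ?_
  · simpa using (hderiv s (hIci (mem_Ici_of_Ioi hs))).fun_pow 2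
  · have hs' : s ∈ Ioi T := hIci (mem_Ici_of_Ioi hs)
    exact sq_mul_le_neg_two_mul_of_half_abs_le (hder s hs')
      (mul_deriv_nonpos_of_tendsto_zero hmono hlim hs')

open MeasureTheory in
theorem stmt18 (T : ℝ) (y : ℝ → ℝ) (hy : ContDiffOn ℝ 1 y (Set.Ioi T))
    (hlim : Filter.Tendsto y Filter.atTop (nhds 0))
    (lam : ℝ) (hlam : 0 < lam)
    (hder : ∀ t ∈ Set.Ioi T, lam / 2 * |y t| ≤ |deriv y t|)
    (D₁ μ₁ : ℝ) (hD₁ : 0 < D₁) (hμ₁ : 0 < μ₁)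
    (hexp : ∀ t ζ : ℝ, T < t → t ≤ ζ → D₁ * |y t| * Real.exp (-μ₁ * (ζ - t)) ≤ |y ζ|)
    (hmono : MonotoneOn y (Set.Ioi T) ∨ AntitoneOn y (Set.Ioi T))
    (hsign : (∀ t ∈ Set.Ioi T, 0 ≤ y t) ∨ (∀ t ∈ Set.Ioi T, y t ≤ 0)) :
    ∃ C : ℝ, 0 < C ∧ ∀ t : ℝ, T < t → ∫ ζ in Set.Ioi t, (y ζ) ^ 2 ≤ C * (y t) ^ 2 :=
  stmt18_general T y hy hlim lam hlam hder hmono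
end
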